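/- Let n ≥ 2 be an integer and let P be a real with 1/(n+1) < P ≤ 1. Define γ(P) = √(P/2 − 1/(2(n+1))) if 1/(n+1) < P ≤ (n+3)/(n+1)², and γ(P) = 1/(2n) + (1/2)·√((1 − 1/n)·(P − 1/n)) if (n+3)/(n+1)² ≤ P ≤ 1. Then the maximum of the linear function −1 + 2x_1 + ∑_{k=2}^n x_k over all x ∈ ℝ^n satisfying ∑_{k=1}^n x_k ≤ 1 and (1 − ∑_{k=1}^n x_k)² + ∑_{k=1}^n x_k² ≤ P is attained and equals 2·γ(P). -/

import Mathlib

/-!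
With `a = x₁` and `u = 1 - ∑ x = λ_{n+1}` the objective is `a - u`, and by Cauchy–Schwarz the
purity constraint is loosest when the other `n - 1` coordinates are equal, so the problem reduces
to maximising `a - u` over the ellipse `(n - 1)(a² + u²) + (1 - a - u)² ≤ (n - 1)P` with `u ≥ 0`.
Without the sign condition the maximum is `√(2P - 2/(n+1))`, attained at `a + u = 2/(n+1)`, and
that point has `u ≥ 0` exactly when `P ≤ (n+3)/(n+1)²`. Beyond this threshold the optimum lies on
`u = 0`, where the constraint reads `(a - 1/n)² ≤ (1 - 1/n)(P - 1/n)`.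
-/

/-- The optimal value parameter `γ(P)` for the `N`-qubit X-MEMS with respect to purity `P`
(`n = 2^{N-1}`). -/
noncomputable def gammaP (n : ℕ) (P : ℝ) : ℝ :=
  if P ≤ ((n : ℝ) + 3) / ((n : ℝ) + 1) ^ 2 then
    Real.sqrt (P / 2 - 1 / (2 * ((n : ℝ) + 1)))
  else
    1 / (2 * (n : ℝ)) + (1 / 2) * Real.sqrt ((1 - 1 / (n : ℝ)) * (P - 1 / (n : ℝ)))

open Finset

def reducedValues (N P : ℝ) : Set ℝ :=
  {v | ∃ a u : ℝ, 0 ≤ u ∧ (N - 1) * (a ^ 2 + u ^ 2) + (1 - a - u) ^ 2 ≤ (N - 1) * P ∧ v = a - u}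

section reduced

variable {N P a u : ℝ}

theorem sub_le_sqrt_of_reduced (hN : 1 < N)
    (h : (N - 1) * (a ^ 2 + u ^ 2) + (1 - a - u) ^ 2 ≤ (N - 1) * P) :
    a - u ≤ √(2 * P - 2 / (N + 1)) := by
  have hN1 : 0 < N + 1 := by linarith
  -- `2 (N + 1) (lhs of h) = (N² - 1)(a - u)² + ((N + 1)(a + u) - 2)² + 2 (N - 1)`
  have hsq : (a - u) ^ 2 ≤ 2 * P - 2 / (N + 1) := by
    rw [le_sub_iff_add_le, ← le_sub_iff_add_le', div_le_iff₀ hN1]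
    nlinarith [sq_nonneg ((N + 1) * (a + u) - 2), mul_pos hN1 (sub_pos.2 hN)]
  exact (le_abs_self _).trans (Real.abs_le_sqrt hsq)

theorem reduced_form_eq (hN : N ≠ 0) (a u : ℝ) :
    (N - 1) * (a ^ 2 + u ^ 2) + (1 - a - u) ^ 2
      = N * (a - u - 1 / N) ^ 2 + (N - 1) / N + 2 * u * ((N + 1) * a - 2) := by
  field_simp; ring

theorem sub_le_of_reduced_of_lt (hN : 1 < N) (hu : 0 ≤ u)
    (h : (N - 1) * (a ^ 2 + u ^ 2) + (1 - a - u) ^ 2 ≤ (N - 1) * P)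
    (hP : (N + 3) / (N + 1) ^ 2 < P) :
    a - u ≤ 1 / N + √((1 - 1 / N) * (P - 1 / N)) := by
  have hN0 : 0 < N := by linarith
  have hN1 : 0 < N + 1 := by linarith
  rw [div_lt_iff₀ (by positivity)] at hP
  -- For `a ≥ 2/(N+1)` the `u`-term of `reduced_form_eq` is nonnegative, so `u = 0` is the
  -- extreme case; otherwise `a - u ≤ a < 2/(N+1)` already lies below the bound.
  by_cases ha : 2 / (N + 1) ≤ a
  · rw [reduced_form_eq hN0.ne'] at h
    have hsq : (a - u - 1 / N) ^ 2 ≤ (1 - 1 / N) * (P - 1 / N) := by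
      have hrhs : N * ((1 - 1 / N) * (P - 1 / N)) = (N - 1) * P - (N - 1) / N := by
        field_simp
      refine le_of_mul_le_mul_left ?_ hN0
      rw [hrhs]
      nlinarith [mul_nonneg hu (sub_nonneg.2 ((div_le_iff₀' hN1).1 ha))]
    linarith [(le_abs_self _).trans (Real.abs_le_sqrt hsq)]
  · have hs : (N - 1) / (N * (N + 1)) ≤ √((1 - 1 / N) * (P - 1 / N)) := by
      apply Real.le_sqrt_of_sq_le
      have hgap : (1 - 1 / N) * (P - 1 / N) - ((N - 1) / (N * (N + 1))) ^ 2
          = (N - 1) / (N * (N + 1) ^ 2) * (P * (N + 1) ^ 2 - (N + 3)) := by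
        field_simp; ring
      rw [← sub_nonneg, hgap]
      exact mul_nonneg (div_nonneg (by linarith) (by positivity)) (by linarith)
    have : 2 / (N + 1) = 1 / N + (N - 1) / (N * (N + 1)) := by field_simp; ring
    linarith

theorem isGreatest_reducedValues_of_le (hN : 1 < N) (hP : 1 / (N + 1) ≤ P)
    (hreg : P ≤ (N + 3) / (N + 1) ^ 2) :
    IsGreatest (reducedValues N P) √(2 * P - 2 / (N + 1)) := by
  have hN1 : N + 1 ≠ 0 := by linarith
  have h2 : 2 / (N + 1) = 2 * (1 / (N + 1)) := by ring
  set d := √(2 * P - 2 / (N + 1))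
  have hd : d ^ 2 = 2 * P - 2 / (N + 1) := Real.sq_sqrt (by linarith)
  refine ⟨⟨1 / (N + 1) + d / 2, 1 / (N + 1) - d / 2, ?_, ?_, by ring⟩, ?_⟩
  · have hd_le : d ≤ 2 / (N + 1) := by
      refine Real.sqrt_le_iff.2 ⟨by positivity, ?_⟩
      have : (2 / (N + 1)) ^ 2 = 2 * ((N + 3) / (N + 1) ^ 2) - 2 / (N + 1) := by
        field_simp; ring
      linarith
    linarith
  · have hval : (N - 1) * ((1 / (N + 1) + d / 2) ^ 2 + (1 / (N + 1) - d / 2) ^ 2)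
        + (1 - (1 / (N + 1) + d / 2) - (1 / (N + 1) - d / 2)) ^ 2
        = (N - 1) * (1 / (N + 1) + d ^ 2 / 2) := by
      field_simp; ring
    rw [hval, hd]
    apply le_of_eq
    ring
  · rintro v ⟨a, u, -, h, rfl⟩
    exact sub_le_sqrt_of_reduced hN h

theorem isGreatest_reducedValues_of_lt (hN : 1 < N) (hreg : (N + 3) / (N + 1) ^ 2 < P) :
    IsGreatest (reducedValues N P) (1 / N + √((1 - 1 / N) * (P - 1 / N))) := by
  have hN0 : 0 < N := by linarith
  set s := √((1 - 1 / N) * (P - 1 / N))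
  have hs : s ^ 2 = (1 - 1 / N) * (P - 1 / N) := by
    refine Real.sq_sqrt (mul_nonneg ?_ ?_)
    · rw [sub_nonneg, div_le_one hN0]; exact hN.le
    · have : 1 / N ≤ (N + 3) / (N + 1) ^ 2 := by
        rw [div_le_div_iff₀ hN0 (by positivity)]; nlinarith
      linarith
  refine ⟨⟨1 / N + s, 0, le_rfl, ?_, by ring⟩, ?_⟩
  · refine le_of_eq ?_
    calc (N - 1) * ((1 / N + s) ^ 2 + 0 ^ 2) + (1 - (1 / N + s) - 0) ^ 2
        = N * s ^ 2 + (N - 1) / N := by rw [reduced_form_eq hN0.ne']; ring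
      _ = (N - 1) * P := by rw [hs]; field_simp; ring
  · rintro v ⟨a, u, hu, h, rfl⟩
    exact sub_le_of_reduced_of_lt hN hu h hreg

end reduced

theorem sum_ite_eq_add_mul {ι : Type*} [Fintype ι] [DecidableEq ι] (i : ι) (b c : ℝ) :
    ∑ k, (if k = i then b else c) = b + (Fintype.card ι - 1) * c := by
  rw [← add_sum_erase _ _ (mem_univ i), if_pos rfl,
    sum_congr rfl fun k hk => if_neg (ne_of_mem_erase hk), sum_const, nsmul_eq_mul,
    cast_card_erase_of_mem (mem_univ i), card_univ]

theorem objective_values_eq_reducedValues {ι : Type*} [Fintype ι] [DecidableEq ι]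
    (hι : 1 < Fintype.card ι) (i : ι) (P : ℝ) :
    {v : ℝ | ∃ x : ι → ℝ, (∑ k, x k ≤ 1) ∧ ((1 - ∑ k, x k) ^ 2 + ∑ k, (x k) ^ 2 ≤ P) ∧
        v = -1 + 2 * x i + ∑ k ∈ univ.erase i, x k}
      = reducedValues (Fintype.card ι) P := by
  have hN1 : 0 < (Fintype.card ι : ℝ) - 1 := by
    rw [sub_pos]; exact_mod_cast hι
  set N : ℝ := (Fintype.card ι : ℝ) with hNdef
  ext v
  constructor
  · rintro ⟨x, hsum, hP, rfl⟩
    have hcs := sq_sum_le_card_mul_sum_sq (s := univ.erase i) (f := x)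
    rw [cast_card_erase_of_mem (mem_univ i), card_univ] at hcs
    have hx := add_sum_erase univ x (mem_univ i)
    have hx2 := add_sum_erase univ (fun k => x k ^ 2) (mem_univ i)
    refine ⟨x i, 1 - ∑ k, x k, sub_nonneg.2 hsum, ?_, by linarith⟩
    rw [show 1 - x i - (1 - ∑ k, x k) = ∑ k ∈ univ.erase i, x k by linarith]
    nlinarith [mul_le_mul_of_nonneg_left hP hN1.le]
  · rintro ⟨a, u, hu, h, rfl⟩
    have hS : ∑ k, (if k = i then a else (1 - a - u) / (N - 1)) = 1 - u := by
      rw [sum_ite_eq_add_mul, ← hNdef]; field_simp; ring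
    have hQ : ∑ k, (if k = i then a else (1 - a - u) / (N - 1)) ^ 2
        = a ^ 2 + (1 - a - u) ^ 2 / (N - 1) := by
      simp only [apply_ite (· ^ 2), sum_ite_eq_add_mul, ← hNdef]; field_simp
    refine ⟨fun k => if k = i then a else (1 - a - u) / (N - 1), by linarith, ?_, ?_⟩
    · rw [hS, hQ]
      have : (1 - a - u) ^ 2 / (N - 1) ≤ P - a ^ 2 - u ^ 2 := by
        rw [div_le_iff₀ hN1]; linarith
      linarith
    · simp only [sum_erase_eq_sub (mem_univ i), hS, if_pos]; ring

theorem two_mul_gammaP (n : ℕ) (P : ℝ) :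
    2 * gammaP n P = if P ≤ ((n : ℝ) + 3) / ((n : ℝ) + 1) ^ 2 then √(2 * P - 2 / (n + 1))
      else 1 / n + √((1 - 1 / n) * (P - 1 / n)) := by
  unfold gammaP
  split_ifs
  · rw [show 2 * P - 2 / (n + 1) = 2 ^ 2 * (P / 2 - 1 / (2 * (n + 1))) by field_simp,
      Real.sqrt_mul (by norm_num), Real.sqrt_sq (by norm_num)]
  · ring

/-- The reduced (convex) form of the X-MEMS optimization with fixed purity `P`: for
`1/(n+1) < P ≤ 1`, the maximum of `-1 + 2 x_1 + ∑_{k=2}^n x_k` over all `x ∈ ℝ^n` with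
`∑_k x_k ≤ 1` and `(1 - ∑_k x_k)² + ∑_k x_k² ≤ P` is attained and equals `2 γ(P)`. -/
theorem xmems_reduced_sdp (n : ℕ) (hn : 2 ≤ n) (P : ℝ)
    (hP1 : 1 / ((n : ℝ) + 1) < P) :
    IsGreatest
      {v : ℝ | ∃ x : Fin n → ℝ,
        (∑ k, x k ≤ 1) ∧
        ((1 - ∑ k, x k) ^ 2 + ∑ k, (x k) ^ 2 ≤ P) ∧
        v = -1 + 2 * x ⟨0, by omega⟩ +
          ∑ k ∈ Finset.univ.erase (⟨0, by omega⟩ : Fin n), x k}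
      (2 * gammaP n P) := by
  have hN : (1 : ℝ) < n := by exact_mod_cast hn
  have hset := objective_values_eq_reducedValues (by rw [Fintype.card_fin]; omega)
    (⟨0, by omega⟩ : Fin n) P
  rw [Fintype.card_fin] at hset
  rw [hset, two_mul_gammaP]
  split_ifs with hreg
  · exact isGreatest_reducedValues_of_le hN hP1.le hreg
  · exact isGreatest_reducedValues_of_lt hN (not_le.1 hreg)
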